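/- Let H ∈ (1/4, 1/2), β₀ > 1/2 − H, and 1 ≤ p₀ ≤ p < ∞. Suppose u₀ ∈ L^{p₀}(ℝ) ∩ L^∞(ℝ), u₀ is Hölder continuous of order β₀ (i.e., there is K ≥ 0 with |u₀(x) − u₀(y)| ≤ K|x − y|^{β₀} for all x, y ∈ ℝ), and ∫_ℝ ‖u₀(·) − u₀(· + h)‖²_{L^{p₀}(ℝ)} |h|^{2H−2} dh < ∞. Then ∫_ℝ ‖u₀(·) − u₀(· + h)‖²_{L^{p}(ℝ)} |h|^{2H−2} dh < ∞. -/

import Mathlib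

open MeasureTheory Set
open scoped ENNReal

/-!
Interpolating through `|f|^p ≤ |f|^{p₀} ‖f‖_∞^{p-p₀}` gives `‖f‖_p² ≤ ‖f‖_{p₀}² + ‖f‖_∞²`.
For the increment `f = u₀ - u₀(· + h)`, Hölder continuity and boundedness give
`‖f‖_∞ ≤ min (K|h|^β₀) (2‖u₀‖_∞)`, so the `L^∞` part weighted by `|h|^{2H-2}` is dominated by a
multiple of `min (|h|^{2β₀+2H-2}) (|h|^{2H-2})`. This is integrable on `ℝ` because
`2β₀ + 2H - 2 > -1` (near `0`) and `2H - 2 < -1` (near infinity).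
-/

theorem eLpNorm_le_max_eLpNorm_eLpNorm_top {α E : Type*} [MeasurableSpace α]
    [NormedAddCommGroup E] {μ : Measure α} (f : α → E) {p₀ p : ℝ≥0∞}
    (hp₀ : p₀ ≠ 0) (hp : p₀ ≤ p) :
    eLpNorm f p μ ≤ max (eLpNorm f p₀ μ) (eLpNorm f ⊤ μ) := by
  set m := max (eLpNorm f p₀ μ) (eLpNorm f ⊤ μ)
  rcases eq_or_ne p ⊤ with rfl | hp_top
  · exact le_max_right _ _
  rcases eq_or_ne m ⊤ with hm | hm
  · exact hm ▸ le_top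
  have hp₀_top : p₀ ≠ ⊤ := ne_top_of_le_ne_top hp_top hp
  have hq₀ : 0 < p₀.toReal := ENNReal.toReal_pos hp₀ hp₀_top
  have hq : p₀.toReal ≤ p.toReal := ENNReal.toReal_mono hp_top hp
  have hpos : 0 < p.toReal := hq₀.trans_le hq
  have hint₀ : ∫⁻ x, ‖f x‖ₑ ^ p₀.toReal ∂μ ≤ m ^ p₀.toReal := by
    rw [← ENNReal.rpow_inv_le_iff hq₀, ← one_div,
      ← eLpNorm_eq_lintegral_rpow_enorm_toReal hp₀ hp₀_top]
    exact le_max_left _ _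
  have hint : ∫⁻ x, ‖f x‖ₑ ^ p.toReal ∂μ ≤ m ^ p.toReal :=
    calc ∫⁻ x, ‖f x‖ₑ ^ p.toReal ∂μ
        ≤ ∫⁻ x, ‖f x‖ₑ ^ p₀.toReal * m ^ (p.toReal - p₀.toReal) ∂μ := by
          refine lintegral_mono_ae ?_
          filter_upwards [enorm_ae_le_eLpNormEssSup f μ] with x hx
          rw [← add_sub_cancel p₀.toReal p.toReal, ENNReal.rpow_add_of_nonneg _ _ hq₀.le
            (sub_nonneg.2 hq), add_sub_cancel]
          gcongr
          exact hx.trans (eLpNorm_exponent_top (f := f) ▸ le_max_right _ _)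
      _ = (∫⁻ x, ‖f x‖ₑ ^ p₀.toReal ∂μ) * m ^ (p.toReal - p₀.toReal) :=
          lintegral_mul_const' _ _ (ENNReal.rpow_ne_top_of_nonneg (sub_nonneg.2 hq) hm)
      _ ≤ m ^ p₀.toReal * m ^ (p.toReal - p₀.toReal) := by gcongr
      _ = m ^ p.toReal := by
          rw [← ENNReal.rpow_add_of_nonneg _ _ hq₀.le (sub_nonneg.2 hq), add_sub_cancel]
  rw [eLpNorm_eq_lintegral_rpow_enorm_toReal (hp₀.bot_lt.trans_le hp).ne' hp_top, one_div,
    ENNReal.rpow_inv_le_iff hpos]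
  exact hint

theorem eLpNorm_sq_le_eLpNorm_sq_add_eLpNorm_top_sq {α E : Type*} [MeasurableSpace α]
    [NormedAddCommGroup E] {μ : Measure α} (f : α → E) {p₀ p : ℝ≥0∞}
    (hp₀ : p₀ ≠ 0) (hp : p₀ ≤ p) :
    eLpNorm f p μ ^ 2 ≤ eLpNorm f p₀ μ ^ 2 + eLpNorm f ⊤ μ ^ 2 := by
  calc eLpNorm f p μ ^ 2 ≤ max (eLpNorm f p₀ μ) (eLpNorm f ⊤ μ) ^ 2 := by
        gcongr; exact eLpNorm_le_max_eLpNorm_eLpNorm_top f hp₀ hp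
    _ = max (eLpNorm f p₀ μ ^ 2) (eLpNorm f ⊤ μ ^ 2) := (pow_left_mono 2).map_max
    _ ≤ eLpNorm f p₀ μ ^ 2 + eLpNorm f ⊤ μ ^ 2 := max_le le_self_add le_add_self

theorem eLpNorm_sub_comp_add_right_le {G E : Type*} [MeasurableSpace G] [Add G] [MeasurableAdd G]
    [NormedAddCommGroup E] {μ : Measure G} [μ.IsAddRightInvariant] {f : G → E}
    (hf : AEStronglyMeasurable f μ) {p : ℝ≥0∞} (hp : 1 ≤ p) (g : G) :
    eLpNorm (fun x => f x - f (x + g)) p μ ≤ 2 * eLpNorm f p μ := by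
  have hshift := measurePreserving_add_right μ g
  calc eLpNorm (fun x => f x - f (x + g)) p μ
      ≤ eLpNorm f p μ + eLpNorm (f ∘ fun x => x + g) p μ :=
        eLpNorm_sub_le hf (hf.comp_measurePreserving hshift) hp
    _ = 2 * eLpNorm f p μ := by rw [eLpNorm_comp_measurePreserving hf hshift, two_mul]

theorem integrable_min_rpow_abs {s t : ℝ} (hs : -1 < s) (ht : t < -1) :
    Integrable (fun x : ℝ => min (|x| ^ s) (|x| ^ t)) := by
  have hmeas : Measurable fun y : ℝ => min (y ^ s) (y ^ t) := by fun_prop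
  simp_rw [← Real.norm_eq_abs]
  rw [integrable_fun_norm_addHaar volume (f := fun y : ℝ => min (y ^ s) (y ^ t))]
  simp only [Module.finrank_self, tsub_self, pow_zero, one_smul]
  rw [← Ioc_union_Ioi_eq_Ioi zero_le_one]
  refine IntegrableOn.union ?_ ?_
  · refine Integrable.mono' ((intervalIntegrable_iff_integrableOn_Ioc_of_le zero_le_one).1
      (intervalIntegral.intervalIntegrable_rpow' hs)) hmeas.aestronglyMeasurable ?_
    refine (ae_restrict_iff' measurableSet_Ioc).2 (.of_forall fun y hy => ?_)
    rw [Real.norm_of_nonneg (le_min (Real.rpow_nonneg hy.1.le _) (Real.rpow_nonneg hy.1.le _))]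
    exact min_le_left _ _
  · refine Integrable.mono' (integrableOn_Ioi_rpow_of_lt ht zero_lt_one)
      hmeas.aestronglyMeasurable ?_
    refine (ae_restrict_iff' measurableSet_Ioi).2 (.of_forall fun y hy => ?_)
    have hy0 : (0 : ℝ) ≤ y := zero_le_one.trans hy.le
    rw [Real.norm_of_nonneg (le_min (Real.rpow_nonneg hy0 _) (Real.rpow_nonneg hy0 _))]
    exact min_le_right _ _

theorem min_mul_rpow_sq_mul_rpow_le {x K c β a : ℝ} (hx : 0 < x) (hK : 0 ≤ K) (hc : 0 ≤ c) :
    min (K * x ^ β) c ^ 2 * x ^ a ≤ (K ^ 2 + c ^ 2) * min (x ^ (2 * β + a)) (x ^ a) := by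
  have h₁ : min (K * x ^ β) c ^ 2 * x ^ a ≤ K ^ 2 * x ^ (2 * β + a) := by
    rw [Real.rpow_add hx, mul_comm 2 β, Real.rpow_mul hx.le, Real.rpow_two, ← mul_assoc,
      ← mul_pow]
    gcongr
    exact min_le_left _ _
  have h₂ : min (K * x ^ β) c ^ 2 * x ^ a ≤ c ^ 2 * x ^ a := by
    gcongr; exact min_le_right _ _
  rw [mul_min_of_nonneg _ _ (by positivity)]
  exact le_min (h₁.trans (by gcongr; nlinarith)) (h₂.trans (by gcongr; nlinarith))

theorem eLpNorm_top_sub_comp_add_right_le_min {G E : Type*} [NormedAddCommGroup G]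
    [MeasurableSpace G] [MeasurableAdd G] [NormedAddCommGroup E] {μ : Measure G}
    [μ.IsAddRightInvariant] {u : G → E} (hu : MemLp u ⊤ μ) {K β : ℝ}
    (hHolder : ∀ x y, ‖u x - u y‖ ≤ K * ‖x - y‖ ^ β) (h : G) :
    eLpNorm (fun x => u x - u (x + h)) ⊤ μ ≤
      ENNReal.ofReal (min (K * ‖h‖ ^ β) (2 * (eLpNorm u ⊤ μ).toReal)) := by
  rw [ENNReal.ofReal_min]
  refine le_min ?_ ?_
  · rw [eLpNorm_exponent_top]
    refine eLpNormEssSup_le_of_ae_bound (.of_forall fun x => ?_)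
    simpa using hHolder x (x + h)
  · calc eLpNorm (fun x => u x - u (x + h)) ⊤ μ ≤ 2 * eLpNorm u ⊤ μ :=
          eLpNorm_sub_comp_add_right_le hu.1 le_top h
      _ = ENNReal.ofReal (2 * (eLpNorm u ⊤ μ).toReal) := by
          rw [ENNReal.ofReal_mul zero_le_two, ENNReal.ofReal_toReal hu.eLpNorm_ne_top,
            ENNReal.ofReal_ofNat]

theorem stmt13 (H β₀ p₀ p : ℝ) (hH2 : H < 1 / 2)
    (hβ : 1 / 2 - H < β₀) (hp₀ : 1 ≤ p₀) (hp : p₀ ≤ p)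
    (u₀ : ℝ → ℝ)
    (hLinf : MemLp u₀ ⊤ volume)
    (K : ℝ) (hK : 0 ≤ K)
    (hHolder : ∀ x y : ℝ, |u₀ x - u₀ y| ≤ K * |x - y| ^ β₀)
    (hfin : (∫⁻ h : ℝ,
        (eLpNorm (fun x => u₀ x - u₀ (x + h)) (ENNReal.ofReal p₀) volume) ^ 2 *
          ENNReal.ofReal (|h| ^ (2 * H - 2))) < ⊤) :
    (∫⁻ h : ℝ,
        (eLpNorm (fun x => u₀ x - u₀ (x + h)) (ENNReal.ofReal p) volume) ^ 2 *
          ENNReal.ofReal (|h| ^ (2 * H - 2))) < ⊤ := by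
  set c := 2 * (eLpNorm u₀ ⊤ volume).toReal
  set g : ℝ → ℝ := fun h =>
    (K ^ 2 + c ^ 2) * min (|h| ^ (2 * β₀ + (2 * H - 2))) (|h| ^ (2 * H - 2))
  have hg : Integrable g := (integrable_min_rpow_abs (by linarith) (by linarith)).const_mul _
  have hpt (h : ℝ) (hh : h ≠ 0) :
      eLpNorm (fun x => u₀ x - u₀ (x + h)) (ENNReal.ofReal p) volume ^ 2 *
          ENNReal.ofReal (|h| ^ (2 * H - 2)) ≤
        eLpNorm (fun x => u₀ x - u₀ (x + h)) (ENNReal.ofReal p₀) volume ^ 2 *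
          ENNReal.ofReal (|h| ^ (2 * H - 2)) + ENNReal.ofReal (g h) := by
    grw [eLpNorm_sq_le_eLpNorm_sq_add_eLpNorm_top_sq _
        (ENNReal.ofReal_ne_zero_iff.2 (by linarith)) (ENNReal.ofReal_le_ofReal hp), add_mul,
      eLpNorm_top_sub_comp_add_right_le_min hLinf hHolder h, Real.norm_eq_abs,
      ← ENNReal.ofReal_pow (le_min (by positivity) (by positivity)),
      ← ENNReal.ofReal_mul (by positivity),
      min_mul_rpow_sq_mul_rpow_le (abs_pos.2 hh) hK (c := c) (by positivity)]
  calc _ ≤ ∫⁻ h : ℝ, eLpNorm (fun x => u₀ x - u₀ (x + h)) (ENNReal.ofReal p₀) volume ^ 2 *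
          ENNReal.ofReal (|h| ^ (2 * H - 2)) + ENNReal.ofReal (g h) :=
        lintegral_mono_ae ((Measure.ae_ne volume 0).mono hpt)
    _ = _ + ∫⁻ h, ENNReal.ofReal (g h) := lintegral_add_right' _ hg.aemeasurable.ennreal_ofReal
    _ < ⊤ := ENNReal.add_lt_top.2 ⟨hfin, hg.lintegral_lt_top⟩
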